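/- For i = 1, 2 let (g_i = h_i ⊕ m_i, g_i) be naturally reductive decompositions with g_i their transvection algebras, of the form g_i = (h_i ⊕ m_{0,i}) ⊕_{L.a.} ℝ^{n_i} with h_i ⊕ m_{0,i} semisimple or zero, and with infinitesimal models (T_i, R_i). Let f_i be the transvection algebra of the (k_i, B_i)-extension of (T_i, R_i) (k_i ⊆ s(g_i), B_i an ad(k_i)-invariant inner product). Suppose each g_i = h_i ⊕ m_i is the canonical base space of its (k_i, B_i)-extension, and suppose the two extensions are isomorphic (their infinitesimal models are carried to one another by a linear isometry). Then there is a Lie algebra isomorphism τ: g_1 → g_2 with τ(h_1) = h_2, such that τ|_{m_1}: m_1 → m_2 is an isometry, and such that the induced map on derivations τ_*(f) := τ ∘ f ∘ τ⁻¹ carries k_1 onto k_2 and is an isometry from (k_1, B_1) to (k_2, B_2). -/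

import Mathlib

noncomputable section

/-- The projection onto the submodule `p` along the complement `q`,
as an endomorphism of the ambient module. -/
def projOnto {g : Type*} [AddCommGroup g] [Module ℝ g] (p q : Submodule ℝ g)
    (hc : IsCompl p q) : g →ₗ[ℝ] g :=
  p.subtype ∘ₗ (p.linearProjOfIsCompl q hc)

lemma projOnto_mem {g : Type*} [AddCommGroup g] [Module ℝ g] (p q : Submodule ℝ g)
    (hc : IsCompl p q) (z : g) : projOnto p q hc z ∈ p := by
  simp only [projOnto, LinearMap.coe_comp, Function.comp_apply, Submodule.coe_subtype]; exact (p.linearProjOfIsCompl q hc z).2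

/-- A naturally reductive decomposition `g = h ⊕ m` of the (finite-dimensional real)
Lie algebra `g`, with isotropy algebra `h`, reductive complement `m`, and a metric
(encoded as a bilinear form on `g` which is required to be symmetric and positive
definite on `m`) satisfying the natural reductivity condition. -/
structure NatRed (g : Type*) [LieRing g] [LieAlgebra ℝ g] where
  h : LieSubalgebra ℝ g
  m : Submodule ℝ g
  compl : IsCompl h.toSubmodule m
  lie_hm : ∀ x ∈ h, ∀ y ∈ m, ⁅x, y⁆ ∈ m
  met : LinearMap.BilinForm ℝ g
  met_symm : ∀ x y : g, met x y = met y x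
  met_posdef : ∀ x ∈ m, x ≠ 0 → 0 < met x x
  natred : ∀ x ∈ m, ∀ y ∈ m, ∀ z ∈ m,
      met ((projOnto m h.toSubmodule compl.symm) ⁅x, y⁆) z
        = - met y ((projOnto m h.toSubmodule compl.symm) ⁅x, z⁆)

namespace NatRed

variable {g : Type*} [LieRing g] [LieAlgebra ℝ g]

/-- Projection onto `m` along `h`. -/
def projm (D : NatRed g) : g →ₗ[ℝ] g := projOnto D.m D.h.toSubmodule D.compl.symm

/-- Projection onto `h` along `m`. -/
def projh (D : NatRed g) : g →ₗ[ℝ] g := projOnto D.h.toSubmodule D.m D.compl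

/-- The torsion `T(x,y) = -[x,y]_m`. -/
def T (D : NatRed g) (x y : g) : g := - D.projm ⁅x, y⁆

lemma T_mem (D : NatRed g) (x y : g) : D.T x y ∈ D.m :=
  neg_mem (projOnto_mem _ _ _ _)

/-- The torsion `3`-form `T(x,y,z) = g(T(x,y),z) = -g([x,y]_m, z)`. -/
def T3 (D : NatRed g) (x y z : g) : ℝ := D.met (D.T x y) z

/-- The curvature `4`-tensor `R(x,y,u,v) = g(R(x,y)u,v) = -g([[x,y]_h,u],v)`. -/
def R4 (D : NatRed g) (x y u v : g) : ℝ := - D.met ⁅D.projh ⁅x, y⁆, u⁆ v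

/-- The decomposition is effective if `ad : h → so(m)` is injective. -/
def Effective (D : NatRed g) : Prop :=
  ∀ x ∈ D.h, (∀ y ∈ D.m, ⁅x, y⁆ = 0) → x = 0

/-- `g` is the transvection algebra of the decomposition:  the decomposition is
effective and `ad(h) = im(R)`, equivalently `h = [m,m]_h`. -/
def IsTransvection (D : NatRed g) : Prop :=
  D.Effective ∧
    D.h.toSubmodule
      = Submodule.span ℝ {z : g | ∃ x ∈ D.m, ∃ y ∈ D.m, z = D.projh ⁅x, y⁆}

/-- The torsion `3`-form splits along a non-trivial orthogonal decomposition of the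
subspace `p`. -/
def SplitsOn (D : NatRed g) (p : Submodule ℝ g) : Prop :=
  ∃ p₁ p₂ : Submodule ℝ g, p₁ ≤ p ∧ p₂ ≤ p ∧ p₁ ≠ ⊥ ∧ p₂ ≠ ⊥ ∧ p₁ ⊔ p₂ = p ∧
    (∀ x ∈ p₁, ∀ y ∈ p₂, D.met x y = 0) ∧
    (∀ x y z : g, (x ∈ p₁ ∨ x ∈ p₂) → (y ∈ p₁ ∨ y ∈ p₂) → (z ∈ p₁ ∨ z ∈ p₂) →
      ¬((x ∈ p₁ ∧ y ∈ p₁ ∧ z ∈ p₁) ∨ (x ∈ p₂ ∧ y ∈ p₂ ∧ z ∈ p₂)) →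
      D.T3 x y z = 0)

/-- The decomposition is reducible if its torsion splits along a non-trivial
orthogonal decomposition `m = m₁ ⊕ m₂`. -/
def Reducible (D : NatRed g) : Prop := D.SplitsOn D.m

/-- The orthogonal complement (with respect to the metric) of a subspace `p`
inside `m`. -/
def orthIn (D : NatRed g) (p : Submodule ℝ g) : Submodule ℝ g :=
  D.m ⊓ LinearMap.BilinForm.orthogonal D.met p

end NatRed

/-- An abelian Lie ideal. -/
def IsAbelianIdeal {g : Type*} [LieRing g] [LieAlgebra ℝ g] (a : LieIdeal ℝ g) : Prop :=
  ∀ x ∈ a, ∀ y ∈ a, ⁅x, y⁆ = 0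

/-- The subspace of elements whose bracket with everything in `p` vanishes. -/
def lieAnn {g : Type*} [LieRing g] [LieAlgebra ℝ g] (p : Submodule ℝ g) :
    Submodule ℝ g where
  carrier := {k : g | ∀ x ∈ p, ⁅k, x⁆ = 0}
  add_mem' := by
    intro a b ha hb x hx
    rw [add_lie, ha x hx, hb x hx, add_zero]
  zero_mem' := by
    intro x hx
    simp
  smul_mem' := by
    intro c k hk x hx
    rw [smul_lie, hk x hx, smul_zero]

/-- The set `s(g)` of skew-symmetric derivations of the naturally reductive
decomposition: derivations of `g` vanishing on `h`, preserving `m` and acting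
skew-symmetrically on `m`. -/
def sg {g : Type*} [LieRing g] [LieAlgebra ℝ g] (D : NatRed g) :
    Set (Module.End ℝ g) :=
  {f | (∀ x y : g, f ⁅x, y⁆ = ⁅f x, y⁆ + ⁅x, f y⁆) ∧
       (∀ x ∈ D.h, f x = 0) ∧ (∀ x ∈ D.m, f x ∈ D.m) ∧
       (∀ x ∈ D.m, ∀ y ∈ D.m, D.met (f x) y = - D.met x (f y))}

attribute [local instance 100] LieRing.ofAssociativeRing

open Finset

section Extension

variable {g F : Type*} [LieRing g] [LieAlgebra ℝ g] [LieRing F] [LieAlgebra ℝ F]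

/-- `E` (a naturally reductive decomposition of `F` with reductive complement
`n ⊕ m`) is the `(k,B)`-extension of the naturally reductive decomposition `D` of
`g`, via the identifications `ιn : k ≅ n ⊆ E.m` and `ιm : m ≅ m ⊆ E.m`:  the
metric of `E` is `B ⊕ g`, its torsion is `T = T₀ + Σ φ(k_i) ∧ n_i + 2 T_n` and its
curvature is `R = R₀ + Σ ψ(k_i) ⊙ ψ(k_i)`. -/
def IsKBExtension (D : NatRed g) (k : LieSubalgebra ℝ (Module.End ℝ g))
    (B : LinearMap.BilinForm ℝ (Module.End ℝ g)) (E : NatRed F)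
    (ιn : Module.End ℝ g →ₗ[ℝ] F) (ιm : g →ₗ[ℝ] F) : Prop :=
  (∀ f ∈ k, ιn f ∈ E.m) ∧ (∀ x ∈ D.m, ιm x ∈ E.m) ∧
  (∀ f ∈ k, ιn f = 0 → f = 0) ∧ (∀ x ∈ D.m, ιm x = 0 → x = 0) ∧
  Submodule.map ιn k.toSubmodule ⊔ Submodule.map ιm D.m = E.m ∧
  -- the metric of the extension is `B ⊕ g`
  (∀ f ∈ k, ∀ f' ∈ k, E.met (ιn f) (ιn f') = B f f') ∧
  (∀ x ∈ D.m, ∀ y ∈ D.m, E.met (ιm x) (ιm y) = D.met x y) ∧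
  (∀ f ∈ k, ∀ x ∈ D.m, E.met (ιn f) (ιm x) = 0) ∧
  -- the torsion of the extension is `T = T₀ + Σ φ(k_i) ∧ n_i + 2 T_n`
  (∀ f₁ ∈ k, ∀ f₂ ∈ k, ∀ f₃ ∈ k, ∀ x₁ ∈ D.m, ∀ x₂ ∈ D.m, ∀ x₃ ∈ D.m,
    E.T3 (ιn f₁ + ιm x₁) (ιn f₂ + ιm x₂) (ιn f₃ + ιm x₃)
      = D.T3 x₁ x₂ x₃ + D.met (f₃ x₁) x₂ + D.met (f₁ x₂) x₃ + D.met (f₂ x₃) x₁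
        + 2 * B ⁅f₁, f₂⁆ f₃) ∧
  -- the curvature of the extension is `R = R₀ + Σ ψ(k_i) ⊙ ψ(k_i)`, computed with
  -- respect to a `B`-orthonormal basis `k₁, …, k_l` of `k`
  (∃ (l : ℕ) (κ : Fin l → Module.End ℝ g),
    (∀ i, κ i ∈ k) ∧ (∀ i j, B (κ i) (κ j) = if i = j then 1 else 0) ∧
    Submodule.span ℝ (Set.range κ) = k.toSubmodule ∧
    (∀ f₁ ∈ k, ∀ f₂ ∈ k, ∀ f₃ ∈ k, ∀ f₄ ∈ k,
     ∀ x₁ ∈ D.m, ∀ x₂ ∈ D.m, ∀ x₃ ∈ D.m, ∀ x₄ ∈ D.m,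
      E.R4 (ιn f₁ + ιm x₁) (ιn f₂ + ιm x₂) (ιn f₃ + ιm x₃) (ιn f₄ + ιm x₄)
        = D.R4 x₁ x₂ x₃ x₄
          + ∑ i : Fin l, (B ⁅κ i, f₁⁆ f₂ + D.met ((κ i) x₁) x₂)
              * (B ⁅κ i, f₃⁆ f₄ + D.met ((κ i) x₃) x₄)))

/-- The naturally reductive decomposition `D` of `g` is the canonical base space of
the extension `E`:  the projection onto `n ⊕ m` of the maximal abelian ideal of
the transvection algebra `F` of the extension is exactly `n`. -/
def IsCanonicalBase (D : NatRed g) (k : LieSubalgebra ℝ (Module.End ℝ g))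
    (E : NatRed F) (ιn : Module.End ℝ g →ₗ[ℝ] F) : Prop :=
  Submodule.map E.projm
      (sSup {b : LieIdeal ℝ F | IsAbelianIdeal b}).toSubmodule
    = Submodule.map ιn k.toSubmodule

/-- The base space has the form `g = h ⊕ m₀ ⊕_{L.a.} ℝⁿ` where `h ⊕ m₀` is
semisimple or zero and `ℝⁿ = rn` is central. -/
def BaseForm (D : NatRed g) (m0 rn : Submodule ℝ g) : Prop :=
  m0 ≤ D.m ∧ rn ≤ D.m ∧ m0 ⊔ rn = D.m ∧ m0 ⊓ rn = ⊥ ∧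
  (∀ x ∈ m0, ∀ y ∈ rn, D.met x y = 0) ∧
  -- `ℝⁿ` is a central (abelian) ideal
  (∀ x : g, ∀ y ∈ rn, ⁅x, y⁆ = 0) ∧
  -- `h ⊕ m₀` is a subalgebra (hence an ideal)
  (∀ x ∈ D.h.toSubmodule ⊔ m0, ∀ y ∈ D.h.toSubmodule ⊔ m0,
      ⁅x, y⁆ ∈ D.h.toSubmodule ⊔ m0) ∧
  -- `h ⊕ m₀` is semisimple or zero: it has no non-zero abelian ideal
  (∀ b : Submodule ℝ g, b ≤ D.h.toSubmodule ⊔ m0 →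
    (∀ x ∈ D.h.toSubmodule ⊔ m0, ∀ y ∈ b, ⁅x, y⁆ ∈ b) →
    (∀ x ∈ b, ∀ y ∈ b, ⁅x, y⁆ = 0) → b = ⊥)

/-- `B` is an `ad(k)`-invariant inner product on `k`. -/
def GoodMetric (k : LieSubalgebra ℝ (Module.End ℝ g))
    (B : LinearMap.BilinForm ℝ (Module.End ℝ g)) : Prop :=
  (∀ f f' : Module.End ℝ g, B f f' = B f' f) ∧
  (∀ f ∈ k, f ≠ 0 → 0 < B f f) ∧
  (∀ f ∈ k, ∀ u ∈ k, ∀ v ∈ k, B ⁅f, u⁆ v + B u ⁅f, v⁆ = 0)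

end Extension

section Aux18A

lemma projOnto_apply_left {g : Type*} [AddCommGroup g] [Module ℝ g]
    {p q : Submodule ℝ g} (hc : IsCompl p q) {z : g} (hz : z ∈ p) :
    projOnto p q hc z = z := by
  have h1 : p.linearProjOfIsCompl q hc z = ⟨z, hz⟩ :=
    Submodule.linearProjOfIsCompl_apply_left hc ⟨z, hz⟩
  simp [projOnto, h1]

lemma projOnto_apply_right {g : Type*} [AddCommGroup g] [Module ℝ g]
    {p q : Submodule ℝ g} (hc : IsCompl p q) {z : g} (hz : z ∈ q) :
    projOnto p q hc z = 0 := by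
  have h1 := Submodule.projectionOnto_apply_of_mem_right hc hz
  simp only [projOnto, LinearMap.coe_comp, Function.comp_apply, Submodule.coe_subtype]
  exact congrArg Subtype.val h1

namespace NatRed

variable {g : Type*} [LieRing g] [LieAlgebra ℝ g] (D : NatRed g)

lemma projh_mem' (z : g) : D.projh z ∈ D.h.toSubmodule := projOnto_mem _ _ _ _
lemma projm_mem' (z : g) : D.projm z ∈ D.m := projOnto_mem _ _ _ _

lemma projh_apply_h {z : g} (hz : z ∈ D.h.toSubmodule) : D.projh z = z :=
  projOnto_apply_left _ hz
lemma projh_apply_m {z : g} (hz : z ∈ D.m) : D.projh z = 0 :=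
  projOnto_apply_right _ hz
lemma projm_apply_m {z : g} (hz : z ∈ D.m) : D.projm z = z :=
  projOnto_apply_left _ hz
lemma projm_apply_h {z : g} (hz : z ∈ D.h.toSubmodule) : D.projm z = 0 :=
  projOnto_apply_right _ hz

lemma projh_add_projm (z : g) : D.projh z + D.projm z = z := by
  exact Submodule.projection_add_projection_eq_self D.compl z

lemma projh_add {a b : g} (ha : a ∈ D.h.toSubmodule) (hb : b ∈ D.m) :
    D.projh (a + b) = a := by
  rw [map_add, D.projh_apply_h ha, D.projh_apply_m hb, add_zero]

lemma projm_add {a b : g} (ha : a ∈ D.h.toSubmodule) (hb : b ∈ D.m) :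
    D.projm (a + b) = b := by
  rw [map_add, D.projm_apply_h ha, D.projm_apply_m hb, zero_add]

lemma lie_hm' {a x : g} (ha : a ∈ D.h.toSubmodule) (hx : x ∈ D.m) : ⁅a, x⁆ ∈ D.m :=
  D.lie_hm a ((LieSubalgebra.mem_toSubmodule _).mp ha) x hx

lemma met_nondeg {x : g} (hx : x ∈ D.m) (h0 : ∀ y ∈ D.m, D.met x y = 0) : x = 0 := by
  by_contra hne
  exact (D.met_posdef x hx hne).ne' (h0 x hx)

lemma eq_of_met {x y : g} (hx : x ∈ D.m) (hy : y ∈ D.m)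
    (h0 : ∀ z ∈ D.m, D.met x z = D.met y z) : x = y := by
  have : x - y = 0 := by
    refine D.met_nondeg (sub_mem hx hy) (fun z hz => ?_)
    rw [map_sub, LinearMap.sub_apply, h0 z hz, sub_self]
  exact sub_eq_zero.mp this

lemma eq_of_adm (heff : D.Effective) {a b : g}
    (ha : a ∈ D.h.toSubmodule) (hb : b ∈ D.h.toSubmodule)
    (hab : ∀ x ∈ D.m, ⁅a, x⁆ = ⁅b, x⁆) : a = b := by
  have h0 : a - b = 0 := by
    refine heff _ ((LieSubalgebra.mem_toSubmodule _).mp (sub_mem ha hb)) (fun y hy => ?_)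
    rw [sub_lie, hab y hy, sub_self]
  exact sub_eq_zero.mp h0

lemma R4_eq (x y u v : g) : D.R4 x y u v = - D.met ⁅D.projh ⁅x, y⁆, u⁆ v := rfl

lemma T3_eq (x y z : g) : D.T3 x y z = - D.met (D.projm ⁅x, y⁆) z := by
  simp [T3, T]

end NatRed

end Aux18A
lemma NatRed.T3_zero_left {g : Type*} [LieRing g] [LieAlgebra ℝ g] (D : NatRed g)
    (x y : g) : D.T3 0 x y = 0 := by
  simp [NatRed.T3, NatRed.T]
section Aux18B

variable {g₁ : Type*} {g₂ : Type*} [LieRing g₁] [LieAlgebra ℝ g₁]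
  [LieRing g₂] [LieAlgebra ℝ g₂]

lemma NatRed.lie_hh {g : Type*} [LieRing g] [LieAlgebra ℝ g] (D : NatRed g) {a b : g}
    (ha : a ∈ D.h.toSubmodule) (hb : b ∈ D.h.toSubmodule) : ⁅a, b⁆ ∈ D.h.toSubmodule :=
  (LieSubalgebra.mem_toSubmodule _).mpr
    (D.h.lie_mem ((LieSubalgebra.mem_toSubmodule _).mp ha)
      ((LieSubalgebra.mem_toSubmodule _).mp hb))

theorem modelIso (D₁ : NatRed g₁) (D₂ : NatRed g₂)
    (htr₁ : D₁.IsTransvection) (htr₂ : D₂.IsTransvection)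
    (φ : ↥D₁.m ≃ₗ[ℝ] ↥D₂.m)
    (hmet : ∀ x y : ↥D₁.m, D₂.met ↑(φ x) ↑(φ y) = D₁.met ↑x ↑y)
    (hT : ∀ x y : ↥D₁.m, D₂.projm ⁅(↑(φ x) : g₂), ↑(φ y)⁆
        = ↑(φ ⟨D₁.projm ⁅(↑x : g₁), ↑y⁆, D₁.projm_mem' _⟩))
    (hR : ∀ x y u v : ↥D₁.m, D₂.R4 ↑(φ x) ↑(φ y) ↑(φ u) ↑(φ v) = D₁.R4 ↑x ↑y ↑u ↑v) :
    ∃ τ : g₁ ≃ₗ⁅ℝ⁆ g₂,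
      (∀ x : ↥D₁.m, τ ↑x = ↑(φ x)) ∧
      Submodule.map τ.toLinearEquiv.toLinearMap D₁.h.toSubmodule = D₂.h.toSubmodule ∧
      Submodule.map τ.toLinearEquiv.toLinearMap D₁.m = D₂.m := by
  classical
  obtain ⟨heff₁, hspan₁⟩ := htr₁
  obtain ⟨heff₂, hspan₂⟩ := htr₂
  set Sm : g₁ →ₗ[ℝ] g₂ :=
    D₂.m.subtype ∘ₗ φ.toLinearMap ∘ₗ (LinearMap.codRestrict D₁.m D₁.projm D₁.projm_mem')
    with hSmdef
  have hSm_apply : ∀ z : g₁, Sm z = ↑(φ ⟨D₁.projm z, D₁.projm_mem' z⟩) := fun z => rfl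
  have hSm_m : ∀ {x : g₁} (hx : x ∈ D₁.m), Sm x = ↑(φ ⟨x, hx⟩) := by
    intro x hx
    have h1 : (⟨D₁.projm x, D₁.projm_mem' x⟩ : ↥D₁.m) = ⟨x, hx⟩ :=
      Subtype.ext (D₁.projm_apply_m hx)
    rw [hSm_apply, h1]
  have hSm_coe : ∀ x : ↥D₁.m, Sm ↑x = ↑(φ x) := fun x => hSm_m x.2
  have hSm_mem : ∀ z, Sm z ∈ D₂.m := fun z => (φ _).2
  have hSm_h : ∀ {x : g₁}, x ∈ D₁.h.toSubmodule → Sm x = 0 := by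
    intro x hx
    have h1 : (⟨D₁.projm x, D₁.projm_mem' x⟩ : ↥D₁.m) = 0 :=
      Subtype.ext (D₁.projm_apply_h hx)
    rw [hSm_apply, h1, map_zero]; rfl
  have hSm_surj : ∀ y ∈ D₂.m, ∃ x ∈ D₁.m, Sm x = y := by
    intro y hy
    refine ⟨↑(φ.symm ⟨y, hy⟩), (φ.symm ⟨y, hy⟩).2, ?_⟩
    rw [hSm_coe, LinearEquiv.apply_symm_apply]
  have hSm_inj : ∀ {x : g₁}, x ∈ D₁.m → Sm x = 0 → x = 0 := by
    intro x hx h0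
    rw [hSm_m hx] at h0
    have h1 : φ ⟨x, hx⟩ = 0 := by exact_mod_cast h0
    have h2 : (⟨x, hx⟩ : ↥D₁.m) = 0 := by
      apply φ.injective; rw [h1, map_zero]
    simpa using congrArg Subtype.val h2
  set P : g₁ → g₂ → Prop := fun a b =>
    b ∈ D₂.h.toSubmodule ∧ ∀ x ∈ D₁.m, ⁅b, Sm x⁆ = Sm ⁅a, x⁆ with hPdef
  have hPuniq : ∀ {a b b'}, P a b → P a b' → b = b' := by
    intro a b b' hb hb'
    refine D₂.eq_of_adm heff₂ hb.1 hb'.1 (fun y hy => ?_)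
    obtain ⟨x, hx, rfl⟩ := hSm_surj y hy
    rw [hb.2 x hx, hb'.2 x hx]
  have hPadd : ∀ {a a' b b'}, P a b → P a' b' → P (a + a') (b + b') := by
    intro a a' b b' h h'
    refine ⟨add_mem h.1 h'.1, fun x hx => ?_⟩
    rw [add_lie, h.2 x hx, h'.2 x hx, ← map_add, ← add_lie]
  have hPsmul : ∀ {a b} (c : ℝ), P a b → P (c • a) (c • b) := by
    intro a b c h
    refine ⟨Submodule.smul_mem _ c h.1, fun x hx => ?_⟩
    rw [smul_lie, h.2 x hx, ← map_smul, ← smul_lie]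
  have hPzero : P 0 0 := ⟨zero_mem _, fun x hx => by rw [zero_lie, zero_lie, map_zero]⟩
  have hPgen : ∀ x y : ↥D₁.m,
      P (D₁.projh ⁅(↑x : g₁), ↑y⁆) (D₂.projh ⁅(↑(φ x) : g₂), ↑(φ y)⁆) := by
    intro x y
    refine ⟨D₂.projh_mem' _, fun u hu => ?_⟩
    have hbr : ⁅D₁.projh ⁅(↑x : g₁), ↑y⁆, u⁆ ∈ D₁.m := D₁.lie_hm' (D₁.projh_mem' _) hu
    refine D₂.eq_of_met (D₂.lie_hm' (D₂.projh_mem' _) (hSm_mem u)) (hSm_mem _)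
      (fun w hw => ?_)
    obtain ⟨v, hv, rfl⟩ := hSm_surj w hw
    rw [hSm_m hu, hSm_m hv, hSm_m hbr]
    have e1 : D₂.met ⁅D₂.projh ⁅(↑(φ x) : g₂), ↑(φ y)⁆, ↑(φ ⟨u, hu⟩)⁆ ↑(φ ⟨v, hv⟩)
        = - D₂.R4 ↑(φ x) ↑(φ y) ↑(φ ⟨u, hu⟩) ↑(φ ⟨v, hv⟩) := by
      rw [NatRed.R4_eq, neg_neg]
    rw [e1, hR, hmet]
    simp [NatRed.R4_eq]
  have hPex : ∀ a ∈ D₁.h.toSubmodule, ∃ b, P a b := by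
    intro a ha
    rw [hspan₁] at ha
    induction ha using Submodule.span_induction with
    | mem z hz =>
        obtain ⟨x, hx, y, hy, rfl⟩ := hz
        exact ⟨_, hPgen ⟨x, hx⟩ ⟨y, hy⟩⟩
    | zero => exact ⟨0, hPzero⟩
    | add a a' _ _ ih ih' =>
        obtain ⟨b, hb⟩ := ih; obtain ⟨b', hb'⟩ := ih'
        exact ⟨b + b', hPadd hb hb'⟩
    | smul c a _ ih =>
        obtain ⟨b, hb⟩ := ih
        exact ⟨c • b, hPsmul c hb⟩
  have hPa : ∀ a : g₁, ∃ b, P (D₁.projh a) b := fun a => hPex _ (D₁.projh_mem' a)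
  set th : g₁ → g₂ := fun a => Classical.choose (hPa a) with hthdef
  have hth : ∀ a, P (D₁.projh a) (th a) := fun a => Classical.choose_spec (hPa a)
  have hth_add : ∀ a a', th (a + a') = th a + th a' := by
    intro a a'
    refine hPuniq (hth _) ?_
    rw [map_add]
    exact hPadd (hth a) (hth a')
  have hth_smul : ∀ (c : ℝ) a, th (c • a) = c • th a := by
    intro c a
    refine hPuniq (hth _) ?_
    rw [map_smul]
    exact hPsmul c (hth a)
  set T : g₁ →ₗ[ℝ] g₂ :=
    { toFun := fun a => th a + Sm a,
      map_add' := by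
        intro a a'
        show th (a + a') + Sm (a + a') = (th a + Sm a) + (th a' + Sm a')
        rw [hth_add, map_add]; abel,
      map_smul' := by
        intro c a
        show th (c • a) + Sm (c • a) = c • (th a + Sm a)
        rw [hth_smul, map_smul, smul_add] }
    with hTdef
  have hT_apply : ∀ a, T a = th a + Sm a := fun a => rfl
  have hT_h : ∀ {a}, a ∈ D₁.h.toSubmodule → T a = th a := by
    intro a ha; rw [hT_apply, hSm_h ha, add_zero]
  have hTP' : ∀ {a}, a ∈ D₁.h.toSubmodule → P a (T a) := by
    intro a ha
    rw [hT_h ha]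
    have h1 := hth a
    rwa [D₁.projh_apply_h ha] at h1
  have hTh_mem : ∀ {a}, a ∈ D₁.h.toSubmodule → T a ∈ D₂.h.toSubmodule :=
    fun ha => (hTP' ha).1
  have hTP : ∀ {a}, a ∈ D₁.h.toSubmodule → ∀ x ∈ D₁.m, ⁅T a, Sm x⁆ = Sm ⁅a, x⁆ :=
    fun ha => (hTP' ha).2
  have hth_m : ∀ {x}, x ∈ D₁.m → th x = 0 := by
    intro x hx
    refine hPuniq (hth x) ?_
    rw [D₁.projh_apply_m hx]
    exact hPzero
  have hT_m : ∀ {x}, x ∈ D₁.m → T x = Sm x := by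
    intro x hx; rw [hT_apply, hth_m hx, zero_add]
  have hkey : ∀ x y : ↥D₁.m,
      T (D₁.projh ⁅(↑x : g₁), ↑y⁆) = D₂.projh ⁅(↑(φ x) : g₂), ↑(φ y)⁆ :=
    fun x y => hPuniq (hTP' (D₁.projh_mem' _)) (hPgen x y)
  have hlie_hh : ∀ {a b}, a ∈ D₁.h.toSubmodule → b ∈ D₁.h.toSubmodule →
      T ⁅a, b⁆ = ⁅T a, T b⁆ := by
    intro a b ha hb
    have hab : ⁅a, b⁆ ∈ D₁.h.toSubmodule := D₁.lie_hh ha hb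
    refine D₂.eq_of_adm heff₂ (hTh_mem hab) (D₂.lie_hh (hTh_mem ha) (hTh_mem hb))
      (fun y hy => ?_)
    obtain ⟨x, hx, rfl⟩ := hSm_surj y hy
    have hrhs : ⁅⁅T a, T b⁆, Sm x⁆ = Sm ⁅a, ⁅b, x⁆⁆ - Sm ⁅b, ⁅a, x⁆⁆ := by
      rw [lie_lie, hTP hb x hx, hTP ha x hx,
        hTP ha _ (D₁.lie_hm' hb hx), hTP hb _ (D₁.lie_hm' ha hx)]
    rw [hTP hab x hx, hrhs, ← map_sub]
    exact congrArg Sm (lie_lie a b x)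
  have hlie_hm : ∀ {a x}, a ∈ D₁.h.toSubmodule → x ∈ D₁.m → T ⁅a, x⁆ = ⁅T a, T x⁆ := by
    intro a x ha hx
    rw [hT_m (D₁.lie_hm' ha hx), hT_m hx, hTP ha x hx]
  have hlie_mm : ∀ x y : ↥D₁.m, T ⁅(↑x : g₁), ↑y⁆ = ⁅T ↑x, T ↑y⁆ := by
    intro x y
    have hd := D₁.projh_add_projm ⁅(↑x : g₁), ↑y⁆
    have hd₂ := D₂.projh_add_projm ⁅(↑(φ x) : g₂), ↑(φ y)⁆
    rw [hT_m x.2, hT_m y.2, hSm_coe, hSm_coe]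
    calc T ⁅(↑x : g₁), ↑y⁆
        = T (D₁.projh ⁅(↑x : g₁), ↑y⁆) + T (D₁.projm ⁅(↑x : g₁), ↑y⁆) := by
          rw [← map_add, hd]
      _ = D₂.projh ⁅(↑(φ x) : g₂), ↑(φ y)⁆ + D₂.projm ⁅(↑(φ x) : g₂), ↑(φ y)⁆ := by
          rw [hkey, hT_m (D₁.projm_mem' _), hSm_m (D₁.projm_mem' _), hT x y]
      _ = ⁅(↑(φ x) : g₂), ↑(φ y)⁆ := hd₂
  have hlie : ∀ z w : g₁, T ⁅z, w⁆ = ⁅T z, T w⁆ := by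
    intro z w
    have hz := D₁.projh_add_projm z
    have hw := D₁.projh_add_projm w
    have ha : D₁.projh z ∈ D₁.h.toSubmodule := D₁.projh_mem' z
    have hx : D₁.projm z ∈ D₁.m := D₁.projm_mem' z
    have hb : D₁.projh w ∈ D₁.h.toSubmodule := D₁.projh_mem' w
    have hy : D₁.projm w ∈ D₁.m := D₁.projm_mem' w
    have hmh : T ⁅D₁.projm z, D₁.projh w⁆ = ⁅T (D₁.projm z), T (D₁.projh w)⁆ := by
      have h1 := hlie_hm hb hx
      rw [← lie_skew, map_neg, h1, ← lie_skew (T (D₁.projh w)), neg_neg]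
    have hmm' : T ⁅D₁.projm z, D₁.projm w⁆ = ⁅T (D₁.projm z), T (D₁.projm w)⁆ :=
      hlie_mm ⟨_, hx⟩ ⟨_, hy⟩
    have hTz : T z = T (D₁.projh z) + T (D₁.projm z) := by rw [← map_add, hz]
    have hTw : T w = T (D₁.projh w) + T (D₁.projm w) := by rw [← map_add, hw]
    calc T ⁅z, w⁆
        = T ⁅D₁.projh z, D₁.projh w⁆ + T ⁅D₁.projh z, D₁.projm w⁆
          + T ⁅D₁.projm z, D₁.projh w⁆ + T ⁅D₁.projm z, D₁.projm w⁆ := by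
          conv_lhs => rw [← hz, ← hw]
          simp only [add_lie, lie_add, map_add]
          abel
      _ = ⁅T (D₁.projh z), T (D₁.projh w)⁆ + ⁅T (D₁.projh z), T (D₁.projm w)⁆
          + ⁅T (D₁.projm z), T (D₁.projh w)⁆ + ⁅T (D₁.projm z), T (D₁.projm w)⁆ := by
          rw [hlie_hh ha hb, hlie_hm ha hy, hmh, hmm']
      _ = ⁅T z, T w⁆ := by rw [hTz, hTw, add_lie, lie_add, lie_add]; abel
  -- injectivity
  have hker : ∀ u, T u = 0 → u = 0 := by
    intro u h0
    rw [hT_apply] at h0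
    have hthm : th u ∈ D₂.h.toSubmodule := (hth u).1
    have hsm : Sm u ∈ D₂.m := hSm_mem u
    have hth0 : th u = 0 := by
      have h1 : th u = -Sm u := eq_neg_of_add_eq_zero_left h0
      have h2 : th u ∈ D₂.h.toSubmodule ⊓ D₂.m := ⟨hthm, h1 ▸ neg_mem hsm⟩
      rw [D₂.compl.inf_eq_bot] at h2
      exact h2
    have hsm0 : Sm u = 0 := by rw [hth0, zero_add] at h0; exact h0
    have hpm : D₁.projm u = 0 := by
      refine hSm_inj (D₁.projm_mem' u) ?_
      rw [hSm_m (D₁.projm_mem' u), ← hSm_apply u]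
      exact hsm0
    have hph : D₁.projh u = 0 := by
      refine heff₁ _ ((LieSubalgebra.mem_toSubmodule _).mp (D₁.projh_mem' u))
        (fun y hy => ?_)
      have h3 := (hth u).2 y hy
      rw [hth0, zero_lie] at h3
      exact hSm_inj (D₁.lie_hm' (D₁.projh_mem' u) hy) h3.symm
    have := D₁.projh_add_projm u
    rw [hph, hpm, add_zero] at this
    exact this.symm
  have hinj : Function.Injective T := by
    intro z w hzw
    have : T (z - w) = 0 := by rw [map_sub, hzw, sub_self]
    have := hker _ this
    exact sub_eq_zero.mp this
  -- h₂ is contained in the image of h₁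
  have hh₂sub : D₂.h.toSubmodule ≤ Submodule.map T D₁.h.toSubmodule := by
    rw [hspan₂]
    refine Submodule.span_le.mpr ?_
    rintro w ⟨x', hx', y', hy', rfl⟩
    set X := φ.symm ⟨x', hx'⟩
    set Y := φ.symm ⟨y', hy'⟩
    have hX : (↑(φ X) : g₂) = x' := by rw [LinearEquiv.apply_symm_apply]
    have hY : (↑(φ Y) : g₂) = y' := by rw [LinearEquiv.apply_symm_apply]
    have := hkey X Y
    rw [hX, hY] at this
    exact ⟨D₁.projh ⁅(↑X : g₁), ↑Y⁆, D₁.projh_mem' _, this⟩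
  have hm₂sub : D₂.m ≤ Submodule.map T D₁.m := by
    intro y hy
    obtain ⟨x, hx, rfl⟩ := hSm_surj y hy
    exact ⟨x, hx, hT_m hx⟩
  have hsurj : Function.Surjective T := by
    intro y₀
    have h1 : y₀ ∈ D₂.h.toSubmodule ⊔ D₂.m := by
      rw [D₂.compl.codisjoint.eq_top]; trivial
    obtain ⟨a, ha, b, hb, rfl⟩ := Submodule.mem_sup.mp h1
    obtain ⟨a₁, _, rfl⟩ := hh₂sub ha
    obtain ⟨b₁, _, rfl⟩ := hm₂sub hb
    exact ⟨a₁ + b₁, map_add T a₁ b₁⟩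
  -- assemble the Lie algebra isomorphism
  let e : g₁ ≃ₗ[ℝ] g₂ := LinearEquiv.ofBijective T ⟨hinj, hsurj⟩
  refine ⟨{ toLieHom := { toLinearMap := T, map_lie' := fun {z w} => hlie z w },
            invFun := e.symm, left_inv := e.left_inv, right_inv := e.right_inv },
          ?_, ?_, ?_⟩
  · intro x
    show T ↑x = ↑(φ x)
    rw [hT_m x.2, hSm_coe]
  · show Submodule.map T D₁.h.toSubmodule = D₂.h.toSubmodule
    refine le_antisymm ?_ ?_
    · rintro w ⟨a, ha, rfl⟩
      exact hTh_mem ha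
    · exact le_trans hh₂sub (le_of_eq rfl)
  · show Submodule.map T D₁.m = D₂.m
    refine le_antisymm ?_ hm₂sub
    rintro w ⟨x, hx, rfl⟩
    rw [hT_m hx]
    exact hSm_mem x

end Aux18B
section Aux18C

variable {F₁ : Type*} {F₂ : Type*} [LieRing F₁] [LieAlgebra ℝ F₁]
  [LieRing F₂] [LieAlgebra ℝ F₂]

lemma map_map_symm {R M N : Type*} [CommRing R] [AddCommGroup M] [Module R M]
    [AddCommGroup N] [Module R N] (e : M ≃ₗ[R] N) (q : Submodule R N) :
    Submodule.map e.toLinearMap (Submodule.map e.symm.toLinearMap q) = q := by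
  rw [← Submodule.map_comp]
  convert Submodule.map_id q
  ext x
  simp

lemma mapAbelianIdeal (e : F₁ ≃ₗ⁅ℝ⁆ F₂) (I : LieIdeal ℝ F₁) (hI : IsAbelianIdeal I) :
    ∃ J : LieIdeal ℝ F₂, IsAbelianIdeal J ∧
      J.toSubmodule = Submodule.map e.toLinearEquiv.toLinearMap I.toSubmodule := by
  have hlie : ∀ z w : F₁, e.toLinearEquiv.toLinearMap ⁅z, w⁆
      = ⁅e.toLinearEquiv.toLinearMap z, e.toLinearEquiv.toLinearMap w⁆ := by
    intro z w
    show e.toLieHom ⁅z, w⁆ = ⁅e.toLieHom z, e.toLieHom w⁆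
    exact e.toLieHom.map_lie z w
  refine ⟨{ toSubmodule := Submodule.map e.toLinearEquiv.toLinearMap I.toSubmodule,
            lie_mem := ?_ }, ?_, rfl⟩
  · rintro x m ⟨m₀, hm₀, rfl⟩
    refine ⟨⁅e.toLinearEquiv.symm x, m₀⁆, I.lie_mem hm₀, ?_⟩
    rw [hlie]
    congr 1
    exact e.toLinearEquiv.apply_symm_apply x
  · rintro x ⟨x₀, hx₀, rfl⟩ y ⟨y₀, hy₀, rfl⟩
    rw [← hlie, hI x₀ hx₀ y₀ hy₀, map_zero]

lemma maxab_transport (e : F₁ ≃ₗ⁅ℝ⁆ F₂) :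
    Submodule.map e.toLinearEquiv.toLinearMap
        (sSup {b : LieIdeal ℝ F₁ | IsAbelianIdeal b}).toSubmodule
      = (sSup {b : LieIdeal ℝ F₂ | IsAbelianIdeal b}).toSubmodule := by
  have h1 : (sSup {b : LieIdeal ℝ F₁ | IsAbelianIdeal b}).toSubmodule
      = sSup {(s : Submodule ℝ F₁) | s ∈ {b : LieIdeal ℝ F₁ | IsAbelianIdeal b}} :=
    LieSubmodule.sSup_toSubmodule _
  have h2 : (sSup {b : LieIdeal ℝ F₂ | IsAbelianIdeal b}).toSubmodule
      = sSup {(s : Submodule ℝ F₂) | s ∈ {b : LieIdeal ℝ F₂ | IsAbelianIdeal b}} :=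
    LieSubmodule.sSup_toSubmodule _
  rw [h1, h2]
  have h3 := (Submodule.orderIsoMapComap e.toLinearEquiv).map_sSup
    {(s : Submodule ℝ F₁) | s ∈ {b : LieIdeal ℝ F₁ | IsAbelianIdeal b}}
  have h4 : ∀ p : Submodule ℝ F₁,
      (Submodule.orderIsoMapComap e.toLinearEquiv) p
        = Submodule.map e.toLinearEquiv.toLinearMap p := fun p => rfl
  simp only [h4] at h3
  rw [h3, ← sSup_image]
  have hsetEq : (fun p => Submodule.map e.toLinearEquiv.toLinearMap p) ''
        {(s : Submodule ℝ F₁) | s ∈ {b : LieIdeal ℝ F₁ | IsAbelianIdeal b}}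
      = {(s : Submodule ℝ F₂) | s ∈ {b : LieIdeal ℝ F₂ | IsAbelianIdeal b}} := by
    ext p
    simp only [Set.mem_image, Set.mem_setOf_eq]
    constructor
    · rintro ⟨q, ⟨I, hI, rfl⟩, rfl⟩
      obtain ⟨J, hJ, hJq⟩ := mapAbelianIdeal e I hI
      refine ⟨J, hJ, ?_⟩
      exact hJq
    · rintro ⟨J, hJ, rfl⟩
      obtain ⟨I, hI, hIq⟩ := mapAbelianIdeal e.symm J hJ
      refine ⟨I.toSubmodule, ⟨I, hI, rfl⟩, ?_⟩
      rw [hIq]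
      have h5 : e.symm.toLinearEquiv = e.toLinearEquiv.symm := rfl
      rw [h5]
      exact map_map_symm e.toLinearEquiv J.toSubmodule
  rw [hsetEq]

lemma mem_iotam_of_orth {g F : Type*} [LieRing g] [LieAlgebra ℝ g]
    [LieRing F] [LieAlgebra ℝ F]
    (D : NatRed g) (k : LieSubalgebra ℝ (Module.End ℝ g))
    (B : LinearMap.BilinForm ℝ (Module.End ℝ g)) (E : NatRed F)
    (ιn : Module.End ℝ g →ₗ[ℝ] F) (ιm : g →ₗ[ℝ] F)
    (hext : IsKBExtension D k B E ιn ιm) {y : F} (hy : y ∈ E.m)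
    (horth : ∀ f ∈ k.toSubmodule, E.met y (ιn f) = 0) :
    y ∈ Submodule.map ιm D.m := by
  obtain ⟨hn_mem, hm_mem, hn_inj, hm_inj, hsup, hBmet, hgmet, horth', htor, hcurv⟩ := hext
  have h1 : y ∈ Submodule.map ιn k.toSubmodule ⊔ Submodule.map ιm D.m := by
    rw [hsup]; exact hy
  obtain ⟨n, hn, w, hw, rfl⟩ := Submodule.mem_sup.mp h1
  obtain ⟨f, hf, rfl⟩ := hn
  obtain ⟨u, hu, rfl⟩ := hw
  have hforth : E.met (ιm u) (ιn f) = 0 := by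
    rw [E.met_symm]
    exact horth' f ((LieSubalgebra.mem_toSubmodule _).mp hf) u hu
  have h2 : E.met (ιn f) (ιn f) = 0 := by
    have h3 := horth f hf
    rw [map_add, LinearMap.add_apply] at h3
    rw [hforth] at h3
    linarith
  have h4 : ιn f = 0 := by
    by_contra hne
    have := E.met_posdef (ιn f) (hn_mem f ((LieSubalgebra.mem_toSubmodule _).mp hf)) hne
    linarith
  rw [h4, zero_add]
  exact ⟨u, hu, rfl⟩

end Aux18C
section Aux18D

variable {F : Type*} [LieRing F] [LieAlgebra ℝ F]

/-- Right bracket, as a linear map. -/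
def brkR (a : F) : F →ₗ[ℝ] F where
  toFun n := ⁅n, a⁆
  map_add' x y := add_lie x y a
  map_smul' c x := smul_lie c x a

/-- The torsion 3-form in its first argument, as a linear functional. -/
def T3fun (E : NatRed F) (a b : F) : F →ₗ[ℝ] ℝ :=
  -((E.met.flip b) ∘ₗ E.projm ∘ₗ brkR a)

lemma T3fun_apply (E : NatRed F) (a b n : F) : T3fun E a b n = E.T3 n a b := by
  simp [T3fun, NatRed.T3, NatRed.T, brkR, LinearMap.flip_apply]

lemma onb_repr (E : NatRed F) {l : ℕ} (e : Fin l → F) (hmem : ∀ i, e i ∈ E.m)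
    (hon : ∀ i j, E.met (e i) (e j) = if i = j then 1 else 0)
    {w : F} (hw : w ∈ Submodule.span ℝ (Set.range e)) :
    ∑ i, E.met w (e i) • e i = w := by
  have hspanm : Submodule.span ℝ (Set.range e) ≤ E.m := by
    rw [Submodule.span_le]; rintro _ ⟨i, rfl⟩; exact hmem i
  set d := w - ∑ i, E.met w (e i) • e i with hd
  have hdmem : d ∈ Submodule.span ℝ (Set.range e) := by
    apply sub_mem hw
    exact Submodule.sum_mem _
      (fun i _ => Submodule.smul_mem _ _ (Submodule.subset_span ⟨i, rfl⟩))
  have hdorth : ∀ j, E.met d (e j) = 0 := by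
    intro j
    rw [hd, map_sub, LinearMap.sub_apply]
    have h1 : (E.met (∑ i, E.met w (e i) • e i)) (e j) = E.met w (e j) := by
      rw [map_sum, LinearMap.sum_apply]
      have h2 : ∀ i, (E.met ((E.met w (e i)) • e i)) (e j)
          = (E.met w) (e i) * (if i = j then 1 else 0) := by
        intro i; rw [map_smul, LinearMap.smul_apply, hon i j, smul_eq_mul]
      rw [Finset.sum_congr rfl (fun i _ => h2 i)]
      simp
    rw [h1, sub_self]
  have hdd : E.met d d = 0 := by
    have hall : ∀ v ∈ Submodule.span ℝ (Set.range e), E.met d v = 0 := by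
      intro v hv
      induction hv using Submodule.span_induction with
      | mem v hv => obtain ⟨i, rfl⟩ := hv; exact hdorth i
      | zero => simp
      | add x y _ _ hx hy => rw [map_add, hx, hy, add_zero]
      | smul c x _ hx => rw [map_smul, hx, smul_zero]
    exact hall d hdmem
  have hd0 : d = 0 := by
    by_contra hne
    exact (E.met_posdef d (hspanm hdmem) hne).ne' hdd
  have := sub_eq_zero.mp hd0
  exact this.symm

lemma sum_onb_eq (E : NatRed F) {l l' : ℕ} (e : Fin l → F) (e' : Fin l' → F)
    (hmem : ∀ i, e i ∈ E.m) (hmem' : ∀ j, e' j ∈ E.m)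
    (hon : ∀ i j, E.met (e i) (e j) = if i = j then 1 else 0)
    (hon' : ∀ i j, E.met (e' i) (e' j) = if i = j then 1 else 0)
    (hspan : Submodule.span ℝ (Set.range e) = Submodule.span ℝ (Set.range e'))
    (Fl Gl : F →ₗ[ℝ] ℝ) :
    ∑ i, Fl (e i) * Gl (e i) = ∑ j, Fl (e' j) * Gl (e' j) := by
  set w := ∑ j, Gl (e' j) • e' j with hwdef
  have hwmem : w ∈ Submodule.span ℝ (Set.range e') :=
    Submodule.sum_mem _
      (fun j _ => Submodule.smul_mem _ _ (Submodule.subset_span ⟨j, rfl⟩))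
  have hG : ∀ n ∈ Submodule.span ℝ (Set.range e'), Gl n = E.met w n := by
    intro n hn
    induction hn using Submodule.span_induction with
    | mem n hn =>
        obtain ⟨j, rfl⟩ := hn
        rw [hwdef, map_sum, LinearMap.sum_apply]
        have h2 : ∀ i, (E.met (Gl (e' i) • e' i)) (e' j)
            = Gl (e' i) * (if i = j then 1 else 0) := by
          intro i; rw [map_smul, LinearMap.smul_apply, hon' i j, smul_eq_mul]
        rw [Finset.sum_congr rfl (fun i _ => h2 i)]
        simp
    | zero => simp
    | add x y _ _ ihx ihy => rw [map_add, map_add, ihx, ihy]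
    | smul c x _ ihx => rw [map_smul, map_smul, ihx]
  have key : ∀ {l'' : ℕ} (f : Fin l'' → F), (∀ i, f i ∈ E.m) →
      (∀ i j, E.met (f i) (f j) = if i = j then 1 else 0) →
      Submodule.span ℝ (Set.range f) = Submodule.span ℝ (Set.range e') →
      ∑ i, Fl (f i) * Gl (f i) = Fl w := by
    intro l'' f hfmem hfon hfspan
    have h1 : ∀ i, Gl (f i) = E.met w (f i) := by
      intro i
      exact hG (f i) (hfspan ▸ Submodule.subset_span ⟨i, rfl⟩)
    calc ∑ i, Fl (f i) * Gl (f i) = ∑ i, Fl ((E.met w) (f i) • f i) := by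
          refine Finset.sum_congr rfl (fun i _ => ?_)
          rw [h1 i, map_smul, smul_eq_mul, mul_comm]
      _ = Fl (∑ i, E.met w (f i) • f i) := (map_sum Fl _ Finset.univ).symm
      _ = Fl w := by rw [onb_repr E f hfmem hfon (by rw [hfspan]; exact hwmem)]
  rw [key e hmem hon hspan, key e' hmem' hon' rfl]

end Aux18D
/-- For `i = 1,2` let `g_i = h_i ⊕ m_i` be naturally reductive
decompositions with `g_i` their transvection algebras, of the form
`g_i = (h_i ⊕ m_{0,i}) ⊕_{L.a.} ℝ^{n_i}` with `h_i ⊕ m_{0,i}` semisimple or zero.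
Let `F_i` carry the `(k_i, B_i)`-extension of `g_i = h_i ⊕ m_i`, with `F_i` its
transvection algebra, and suppose each `g_i = h_i ⊕ m_i` is the canonical base
space of its extension.  If the two extensions are isomorphic (their infinitesimal
models are carried to one another by a linear isometry), then there is a Lie
algebra isomorphism `τ : g₁ → g₂` with `τ(h₁) = h₂`, `τ|_{m₁} : m₁ → m₂` an
isometry, and the induced map on derivations `τ_* : f ↦ τ ∘ f ∘ τ⁻¹` an isometry
from `(k₁, B₁)` onto `(k₂, B₂)`. -/
theorem statement18
    {g₁ g₂ F₁ F₂ : Type*}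
    [LieRing g₁] [LieAlgebra ℝ g₁] [FiniteDimensional ℝ g₁]
    [LieRing g₂] [LieAlgebra ℝ g₂] [FiniteDimensional ℝ g₂]
    [LieRing F₁] [LieAlgebra ℝ F₁] [FiniteDimensional ℝ F₁]
    [LieRing F₂] [LieAlgebra ℝ F₂] [FiniteDimensional ℝ F₂]
    (D₁ : NatRed g₁) (D₂ : NatRed g₂)
    (htr₁ : D₁.IsTransvection) (htr₂ : D₂.IsTransvection)
    -- the base spaces have the form `(h ⊕ m₀) ⊕_{L.a.} ℝⁿ`
    (m01 rn1 : Submodule ℝ g₁) (hbf₁ : BaseForm D₁ m01 rn1)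
    (m02 rn2 : Submodule ℝ g₂) (hbf₂ : BaseForm D₂ m02 rn2)
    -- the extension data: `k_i ⊆ s(g_i)` and `ad(k_i)`-invariant inner products
    (k₁ : LieSubalgebra ℝ (Module.End ℝ g₁)) (hk₁ : (k₁ : Set (Module.End ℝ g₁)) ⊆ sg D₁)
    (k₂ : LieSubalgebra ℝ (Module.End ℝ g₂)) (hk₂ : (k₂ : Set (Module.End ℝ g₂)) ⊆ sg D₂)
    (B₁ : LinearMap.BilinForm ℝ (Module.End ℝ g₁)) (hB₁ : GoodMetric k₁ B₁)
    (B₂ : LinearMap.BilinForm ℝ (Module.End ℝ g₂)) (hB₂ : GoodMetric k₂ B₂)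
    -- `F_i` is the transvection algebra of the `(k_i,B_i)`-extension of `D_i`
    (E₁ : NatRed F₁) (E₂ : NatRed F₂)
    (hEtr₁ : E₁.IsTransvection) (hEtr₂ : E₂.IsTransvection)
    (ιn₁ : Module.End ℝ g₁ →ₗ[ℝ] F₁) (ιm₁ : g₁ →ₗ[ℝ] F₁)
    (ιn₂ : Module.End ℝ g₂ →ₗ[ℝ] F₂) (ιm₂ : g₂ →ₗ[ℝ] F₂)
    (hext₁ : IsKBExtension D₁ k₁ B₁ E₁ ιn₁ ιm₁)
    (hext₂ : IsKBExtension D₂ k₂ B₂ E₂ ιn₂ ιm₂)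
    -- each `g_i = h_i ⊕ m_i` is the canonical base space of its extension
    (hcb₁ : IsCanonicalBase D₁ k₁ E₁ ιn₁)
    (hcb₂ : IsCanonicalBase D₂ k₂ E₂ ιn₂)
    -- the two extensions are isomorphic: a linear isometry of the reductive
    -- complements carries one infinitesimal model to the other
    (M : ↥E₁.m ≃ₗ[ℝ] ↥E₂.m)
    (hMiso : ∀ x y : ↥E₁.m, E₂.met (M x : F₂) (M y : F₂) = E₁.met (x : F₁) (y : F₁))
    (hMT : ∀ x y : ↥E₁.m,
      ((M ⟨E₁.T (x : F₁) (y : F₁), E₁.T_mem _ _⟩ : ↥E₂.m) : F₂)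
        = E₂.T (M x : F₂) (M y : F₂))
    (hMR : ∀ x y u v : ↥E₁.m,
      E₂.R4 (M x : F₂) (M y : F₂) (M u : F₂) (M v : F₂)
        = E₁.R4 (x : F₁) (y : F₁) (u : F₁) (v : F₁)) :
    ∃ τ : g₁ ≃ₗ⁅ℝ⁆ g₂,
      Submodule.map τ.toLinearEquiv.toLinearMap D₁.h.toSubmodule = D₂.h.toSubmodule ∧
      Submodule.map τ.toLinearEquiv.toLinearMap D₁.m = D₂.m ∧
      (∀ x ∈ D₁.m, ∀ y ∈ D₁.m, D₂.met (τ x) (τ y) = D₁.met x y) ∧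
      Submodule.map (τ.toLinearEquiv.conj).toLinearMap k₁.toSubmodule
        = k₂.toSubmodule ∧
      (∀ f ∈ k₁, ∀ f' ∈ k₁,
        B₂ (τ.toLinearEquiv.conj f) (τ.toLinearEquiv.conj f') = B₁ f f') := by
  classical
  obtain ⟨hn₁mem, hm₁mem, hn₁inj, hm₁inj, hsup₁, hB₁met, hg₁met, horth₁, htor₁, hcurv₁⟩ := hext₁
  obtain ⟨hn₂mem, hm₂mem, hn₂inj, hm₂inj, hsup₂, hB₂met, hg₂met, horth₂, htor₂, hcurv₂⟩ := hext₂
  obtain ⟨l₁, κ₁, hκ₁mem, hκ₁on, hκ₁span, hR₁⟩ := hcurv₁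
  obtain ⟨l₂, κ₂, hκ₂mem, hκ₂on, hκ₂span, hR₂⟩ := hcurv₂
  -- Step 1: transport the model isometry `M` to a Lie algebra isomorphism `Φ : F₁ ≅ F₂`
  have hMT' : ∀ x y : ↥E₁.m, E₂.projm ⁅(↑(M x) : F₂), ↑(M y)⁆
      = ↑(M ⟨E₁.projm ⁅(↑x : F₁), ↑y⁆, E₁.projm_mem' _⟩) := by
    intro x y
    have h1 := hMT x y
    have h2 : E₂.projm ⁅(↑(M x) : F₂), ↑(M y)⁆ = -E₂.T ↑(M x) ↑(M y) := by
      rw [NatRed.T, neg_neg]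
    have h3 : (⟨E₁.projm ⁅(↑x : F₁), ↑y⁆, E₁.projm_mem' _⟩ : ↥E₁.m)
        = -(⟨E₁.T ↑x ↑y, E₁.T_mem _ _⟩ : ↥E₁.m) := by
      apply Subtype.ext
      show E₁.projm ⁅(↑x : F₁), ↑y⁆ = -(E₁.T ↑x ↑y)
      rw [NatRed.T, neg_neg]
    rw [h2, ← h1, h3, map_neg]
    simp
  obtain ⟨Φ, hΦM, hΦh, hΦm⟩ := modelIso E₁ E₂ hEtr₁ hEtr₂ M hMiso hMT' hMR
  set Φl := Φ.toLinearEquiv.toLinearMap with hΦldef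
  have hΦmet : ∀ p q : F₁, p ∈ E₁.m → q ∈ E₁.m → E₂.met (Φl p) (Φl q) = E₁.met p q := by
    intro p q hp hq
    have h1 := hMiso ⟨p, hp⟩ ⟨q, hq⟩
    rw [← hΦM ⟨p, hp⟩, ← hΦM ⟨q, hq⟩] at h1
    exact h1
  have hΦlie : ∀ z w : F₁, Φl ⁅z, w⁆ = ⁅Φl z, Φl w⁆ := by
    intro z w
    show Φ.toLieHom ⁅z, w⁆ = ⁅Φ.toLieHom z, Φ.toLieHom w⁆
    exact Φ.toLieHom.map_lie z w
  have hΦmmem : ∀ {p : F₁}, p ∈ E₁.m → Φl p ∈ E₂.m := by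
    intro p hp
    rw [← hΦm]; exact ⟨_, hp, rfl⟩
  have hcomm : ∀ z : F₁, Φl (E₁.projm z) = E₂.projm (Φl z) := by
    intro z
    have ha : Φl (E₁.projh z) ∈ E₂.h.toSubmodule := by
      rw [← hΦh]; exact ⟨_, E₁.projh_mem' z, rfl⟩
    have hx : Φl (E₁.projm z) ∈ E₂.m := hΦmmem (E₁.projm_mem' z)
    have hz : Φl z = Φl (E₁.projh z) + Φl (E₁.projm z) := by
      rw [← map_add]
      congr 1
      exact (E₁.projh_add_projm z).symm
    rw [hz, E₂.projm_add ha hx]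
  have hΦT3 : ∀ p q r : F₁, p ∈ E₁.m → q ∈ E₁.m → r ∈ E₁.m →
      E₂.T3 (Φl p) (Φl q) (Φl r) = E₁.T3 p q r := by
    intro p q r hp hq hr
    have h1 : E₂.T (Φl p) (Φl q) = Φl (E₁.T p q) := by
      rw [NatRed.T, NatRed.T, ← hΦlie, ← hcomm, map_neg]
    show E₂.met (E₂.T (Φl p) (Φl q)) (Φl r) = E₁.met (E₁.T p q) r
    rw [h1]
    exact hΦmet _ _ (E₁.T_mem p q) hr
  have hΦR4 : ∀ p q u v : F₁, p ∈ E₁.m → q ∈ E₁.m → u ∈ E₁.m → v ∈ E₁.m →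
      E₂.R4 (Φl p) (Φl q) (Φl u) (Φl v) = E₁.R4 p q u v := by
    intro p q u v hp hq hu hv
    have h1 := hMR ⟨p, hp⟩ ⟨q, hq⟩ ⟨u, hu⟩ ⟨v, hv⟩
    rw [← hΦM ⟨p, hp⟩, ← hΦM ⟨q, hq⟩, ← hΦM ⟨u, hu⟩, ← hΦM ⟨v, hv⟩] at h1
    exact h1
  -- Step 2: the fibers correspond under `Φ`
  have hmaxab := maxab_transport Φ
  have hccomp : E₂.projm ∘ₗ Φl = Φl ∘ₗ E₁.projm :=
    LinearMap.ext (fun z => (hcomm z).symm)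
  have hstar : Submodule.map ιn₂ k₂.toSubmodule
      = Submodule.map Φl (Submodule.map ιn₁ k₁.toSubmodule) := by
    calc Submodule.map ιn₂ k₂.toSubmodule
        = Submodule.map E₂.projm (sSup {b : LieIdeal ℝ F₂ | IsAbelianIdeal b}).toSubmodule :=
          hcb₂.symm
      _ = Submodule.map E₂.projm
            (Submodule.map Φl (sSup {b : LieIdeal ℝ F₁ | IsAbelianIdeal b}).toSubmodule) := by
          rw [hmaxab]
      _ = Submodule.map (E₂.projm ∘ₗ Φl)
            (sSup {b : LieIdeal ℝ F₁ | IsAbelianIdeal b}).toSubmodule :=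
          (Submodule.map_comp _ _ _).symm
      _ = Submodule.map (Φl ∘ₗ E₁.projm)
            (sSup {b : LieIdeal ℝ F₁ | IsAbelianIdeal b}).toSubmodule := by rw [hccomp]
      _ = Submodule.map Φl
            (Submodule.map E₁.projm (sSup {b : LieIdeal ℝ F₁ | IsAbelianIdeal b}).toSubmodule) :=
          Submodule.map_comp _ _ _
      _ = Submodule.map Φl (Submodule.map ιn₁ k₁.toSubmodule) := by rw [hcb₁]
  -- Step 3: construct the base isometry `φ : m₁ ≃ m₂`
  have hland : ∀ x : g₁, x ∈ D₁.m → Φl (ιm₁ x) ∈ Submodule.map ιm₂ D₂.m := by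
    intro x hx
    refine mem_iotam_of_orth D₂ k₂ B₂ E₂ ιn₂ ιm₂
      ⟨hn₂mem, hm₂mem, hn₂inj, hm₂inj, hsup₂, hB₂met, hg₂met, horth₂, htor₂,
        ⟨l₂, κ₂, hκ₂mem, hκ₂on, hκ₂span, hR₂⟩⟩ (hΦmmem (hm₁mem x hx)) ?_
    intro f₂ hf₂
    have h1 : ιn₂ f₂ ∈ Submodule.map ιn₂ k₂.toSubmodule := ⟨f₂, hf₂, rfl⟩
    rw [hstar] at h1
    obtain ⟨q, hq, hqe⟩ := h1
    obtain ⟨f₁, hf₁, rfl⟩ := hq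
    rw [← hqe]
    rw [hΦmet _ _ (hm₁mem x hx) (hn₁mem f₁ ((LieSubalgebra.mem_toSubmodule _).mp hf₁))]
    rw [E₁.met_symm]
    exact horth₁ f₁ ((LieSubalgebra.mem_toSubmodule _).mp hf₁) x hx
  have hchoice : ∀ x : ↥D₁.m, ∃ y : ↥D₂.m, ιm₂ ↑y = Φl (ιm₁ ↑x) := by
    intro x
    obtain ⟨y, hy, hyy⟩ := hland ↑x x.2
    exact ⟨⟨y, hy⟩, hyy⟩
  set p : ↥D₁.m → ↥D₂.m := fun x => Classical.choose (hchoice x) with hpdef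
  have hp : ∀ x : ↥D₁.m, ιm₂ ↑(p x) = Φl (ιm₁ ↑x) := fun x => Classical.choose_spec (hchoice x)
  have hpuniq : ∀ (y y' : ↥D₂.m), ιm₂ ↑y = ιm₂ ↑y' → y = y' := by
    intro y y' h
    apply Subtype.ext
    have h0 : ιm₂ (↑y - ↑y') = 0 := by rw [map_sub, h, sub_self]
    have h1 := hm₂inj _ (sub_mem y.2 y'.2) h0
    exact sub_eq_zero.mp h1
  set plin : ↥D₁.m →ₗ[ℝ] ↥D₂.m :=
    { toFun := p,
      map_add' := by
        intro x x'
        have hL : ιm₂ ↑(p (x + x')) = Φl (ιm₁ ↑x) + Φl (ιm₁ ↑x') := by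
          rw [hp]
          show Φl (ιm₁ (↑x + ↑x')) = _
          rw [map_add, map_add]
        have hR2 : ιm₂ ↑(p x + p x') = Φl (ιm₁ ↑x) + Φl (ιm₁ ↑x') := by
          show ιm₂ (↑(p x) + ↑(p x')) = _
          rw [map_add, hp, hp]
        exact hpuniq _ _ (hL.trans hR2.symm),
      map_smul' := by
        intro c x
        show p (c • x) = c • p x
        have hL : ιm₂ ↑(p (c • x)) = c • Φl (ιm₁ ↑x) := by
          rw [hp]
          show Φl (ιm₁ (c • ↑x)) = _
          rw [map_smul, map_smul]
        have hR2 : ιm₂ ↑(c • p x) = c • Φl (ιm₁ ↑x) := by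
          show ιm₂ (c • ↑(p x)) = _
          rw [map_smul, hp]
        exact hpuniq _ _ (hL.trans hR2.symm) }
    with hplindef
  have hpinj : Function.Injective plin := by
    intro x x' h
    have h1 : ιm₂ ↑(p x) = ιm₂ ↑(p x') := by
      show ιm₂ ↑(plin x) = ιm₂ ↑(plin x'); rw [h]
    rw [hp, hp] at h1
    have h2 : ιm₁ ↑x = ιm₁ ↑x' := Φ.toLinearEquiv.injective h1
    have h3 : ιm₁ (↑x - ↑x') = 0 := by rw [map_sub, h2, sub_self]
    have h4 := hm₁inj _ (sub_mem x.2 x'.2) h3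
    exact Subtype.ext (sub_eq_zero.mp h4)
  have hpsurj : Function.Surjective plin := by
    intro y
    have h1 : (ιm₂ ↑y : F₂) ∈ Submodule.map Φl E₁.m := by
      rw [hΦm]; exact hm₂mem ↑y y.2
    obtain ⟨z, hz, hzy⟩ := h1
    have h2 : z ∈ Submodule.map ιm₁ D₁.m := by
      refine mem_iotam_of_orth D₁ k₁ B₁ E₁ ιn₁ ιm₁
        ⟨hn₁mem, hm₁mem, hn₁inj, hm₁inj, hsup₁, hB₁met, hg₁met, horth₁, htor₁,
          ⟨l₁, κ₁, hκ₁mem, hκ₁on, hκ₁span, hR₁⟩⟩ hz ?_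
      intro f₁ hf₁
      have h3 : E₁.met z (ιn₁ f₁)
          = E₂.met (Φl z) (Φl (ιn₁ f₁)) :=
        (hΦmet _ _ hz (hn₁mem f₁ ((LieSubalgebra.mem_toSubmodule _).mp hf₁))).symm
      rw [h3, hzy]
      have h4 : Φl (ιn₁ f₁) ∈ Submodule.map ιn₂ k₂.toSubmodule := by
        rw [hstar]; exact ⟨ιn₁ f₁, ⟨f₁, hf₁, rfl⟩, rfl⟩
      obtain ⟨f₂, hf₂, hf₂e⟩ := h4
      rw [← hf₂e, E₂.met_symm]
      exact horth₂ f₂ ((LieSubalgebra.mem_toSubmodule _).mp hf₂) ↑y y.2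
    obtain ⟨u, hu, rfl⟩ := h2
    refine ⟨⟨u, hu⟩, ?_⟩
    refine hpuniq _ _ ?_
    show ιm₂ ↑(p ⟨u, hu⟩) = ιm₂ ↑y
    rw [hp, hzy]
  set φ : ↥D₁.m ≃ₗ[ℝ] ↥D₂.m := LinearEquiv.ofBijective plin ⟨hpinj, hpsurj⟩ with hφdef
  have hφ : ∀ x : ↥D₁.m, ιm₂ ↑(φ x) = Φl (ιm₁ ↑x) := fun x => hp x
  -- Step 4: torsion and curvature of the extensions restricted to `n` and `m`
  have hT3m₁ : ∀ x ∈ D₁.m, ∀ y ∈ D₁.m, ∀ z ∈ D₁.m,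
      E₁.T3 (ιm₁ x) (ιm₁ y) (ιm₁ z) = D₁.T3 x y z := by
    intro x hx y hy z hz
    have h := htor₁ 0 k₁.zero_mem 0 k₁.zero_mem 0 k₁.zero_mem x hx y hy z hz
    simpa using h
  have hT3m₂ : ∀ x ∈ D₂.m, ∀ y ∈ D₂.m, ∀ z ∈ D₂.m,
      E₂.T3 (ιm₂ x) (ιm₂ y) (ιm₂ z) = D₂.T3 x y z := by
    intro x hx y hy z hz
    have h := htor₂ 0 k₂.zero_mem 0 k₂.zero_mem 0 k₂.zero_mem x hx y hy z hz
    simpa using h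
  have hT3n₁ : ∀ f ∈ k₁, ∀ x ∈ D₁.m, ∀ y ∈ D₁.m,
      E₁.T3 (ιn₁ f) (ιm₁ x) (ιm₁ y) = D₁.met (f x) y := by
    intro f hf x hx y hy
    have h := htor₁ f hf 0 k₁.zero_mem 0 k₁.zero_mem 0 (zero_mem D₁.m) x hx y hy
    simpa [D₁.T3_zero_left] using h
  have hT3n₂ : ∀ f ∈ k₂, ∀ x ∈ D₂.m, ∀ y ∈ D₂.m,
      E₂.T3 (ιn₂ f) (ιm₂ x) (ιm₂ y) = D₂.met (f x) y := by
    intro f hf x hx y hy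
    have h := htor₂ f hf 0 k₂.zero_mem 0 k₂.zero_mem 0 (zero_mem D₂.m) x hx y hy
    simpa [D₂.T3_zero_left] using h
  have hR4m₁ : ∀ x₁ ∈ D₁.m, ∀ x₂ ∈ D₁.m, ∀ x₃ ∈ D₁.m, ∀ x₄ ∈ D₁.m,
      E₁.R4 (ιm₁ x₁) (ιm₁ x₂) (ιm₁ x₃) (ιm₁ x₄)
        = D₁.R4 x₁ x₂ x₃ x₄
          + ∑ i : Fin l₁, (D₁.met ((κ₁ i) x₁)) x₂ * (D₁.met ((κ₁ i) x₃)) x₄ := by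
    intro x₁ h₁ x₂ h₂ x₃ h₃ x₄ h₄
    have h := hR₁ 0 k₁.zero_mem 0 k₁.zero_mem 0 k₁.zero_mem 0 k₁.zero_mem
      x₁ h₁ x₂ h₂ x₃ h₃ x₄ h₄
    simpa using h
  have hR4m₂ : ∀ x₁ ∈ D₂.m, ∀ x₂ ∈ D₂.m, ∀ x₃ ∈ D₂.m, ∀ x₄ ∈ D₂.m,
      E₂.R4 (ιm₂ x₁) (ιm₂ x₂) (ιm₂ x₃) (ιm₂ x₄)
        = D₂.R4 x₁ x₂ x₃ x₄
          + ∑ i : Fin l₂, (D₂.met ((κ₂ i) x₁)) x₂ * (D₂.met ((κ₂ i) x₃)) x₄ := by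
    intro x₁ h₁ x₂ h₂ x₃ h₃ x₄ h₄
    have h := hR₂ 0 k₂.zero_mem 0 k₂.zero_mem 0 k₂.zero_mem 0 k₂.zero_mem
      x₁ h₁ x₂ h₂ x₃ h₃ x₄ h₄
    simpa using h
  -- Step 5: `φ` carries the infinitesimal model of `D₁` to that of `D₂`
  have hmetφ : ∀ x y : ↥D₁.m, D₂.met ↑(φ x) ↑(φ y) = D₁.met ↑x ↑y := by
    intro x y
    rw [← hg₂met _ (φ x).2 _ (φ y).2, hφ, hφ,
        hΦmet _ _ (hm₁mem _ x.2) (hm₁mem _ y.2), hg₁met _ x.2 _ y.2]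
  have hT3φ : ∀ x y z : ↥D₁.m, D₂.T3 ↑(φ x) ↑(φ y) ↑(φ z) = D₁.T3 ↑x ↑y ↑z := by
    intro x y z
    rw [← hT3m₂ _ (φ x).2 _ (φ y).2 _ (φ z).2, hφ, hφ, hφ,
        hΦT3 _ _ _ (hm₁mem _ x.2) (hm₁mem _ y.2) (hm₁mem _ z.2),
        hT3m₁ _ x.2 _ y.2 _ z.2]
  have hφsurj : ∀ w ∈ D₂.m, ∃ w₀ : ↥D₁.m, (↑(φ w₀) : g₂) = w := by
    intro w hw
    exact ⟨φ.symm ⟨w, hw⟩, by rw [LinearEquiv.apply_symm_apply]⟩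
  have hTφ : ∀ x y : ↥D₁.m, D₂.projm ⁅(↑(φ x) : g₂), ↑(φ y)⁆
      = ↑(φ ⟨D₁.projm ⁅(↑x : g₁), ↑y⁆, D₁.projm_mem' _⟩) := by
    intro x y
    have hbm : D₁.projm ⁅(↑x : g₁), ↑y⁆ ∈ D₁.m := D₁.projm_mem' _
    refine D₂.eq_of_met (D₂.projm_mem' _) (φ ⟨_, hbm⟩).2 (fun w hw => ?_)
    obtain ⟨w₀, rfl⟩ := hφsurj w hw
    have e1 : D₂.met (D₂.projm ⁅(↑(φ x) : g₂), ↑(φ y)⁆) ↑(φ w₀)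
        = - D₂.T3 ↑(φ x) ↑(φ y) ↑(φ w₀) := by
      rw [D₂.T3_eq, neg_neg]
    rw [e1, hT3φ, hmetφ]
    simp [D₁.T3_eq]
  -- the sums over the orthonormal bases agree
  have hRφ : ∀ x y u v : ↥D₁.m,
      D₂.R4 ↑(φ x) ↑(φ y) ↑(φ u) ↑(φ v) = D₁.R4 ↑x ↑y ↑u ↑v := by
    intro x y u v
    have h2 := hR4m₂ _ (φ x).2 _ (φ y).2 _ (φ u).2 _ (φ v).2
    have h1 := hR4m₁ _ x.2 _ y.2 _ u.2 _ v.2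
    have h3 : E₂.R4 (ιm₂ ↑(φ x)) (ιm₂ ↑(φ y)) (ιm₂ ↑(φ u)) (ιm₂ ↑(φ v))
        = E₁.R4 (ιm₁ ↑x) (ιm₁ ↑y) (ιm₁ ↑u) (ιm₁ ↑v) := by
      rw [hφ, hφ, hφ, hφ]
      exact hΦR4 _ _ _ _ (hm₁mem _ x.2) (hm₁mem _ y.2) (hm₁mem _ u.2) (hm₁mem _ v.2)
    have hsum : ∑ i : Fin l₂, (D₂.met ((κ₂ i) ↑(φ x))) ↑(φ y) * (D₂.met ((κ₂ i) ↑(φ u))) ↑(φ v)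
        = ∑ i : Fin l₁, (D₁.met ((κ₁ i) ↑x)) ↑y * (D₁.met ((κ₁ i) ↑u)) ↑v := by
      set e : Fin l₂ → F₂ := fun j => ιn₂ (κ₂ j) with hedef
      set e' : Fin l₁ → F₂ := fun i => Φl (ιn₁ (κ₁ i)) with he'def
      have hemem : ∀ j, e j ∈ E₂.m := fun j => hn₂mem _ (hκ₂mem j)
      have he'mem : ∀ i, e' i ∈ E₂.m := fun i => hΦmmem (hn₁mem _ (hκ₁mem i))
      have heon : ∀ i j, E₂.met (e i) (e j) = if i = j then 1 else 0 := by
        intro i j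
        rw [hedef]
        show E₂.met (ιn₂ (κ₂ i)) (ιn₂ (κ₂ j)) = _
        rw [hB₂met _ (hκ₂mem i) _ (hκ₂mem j)]
        exact hκ₂on i j
      have he'on : ∀ i j, E₂.met (e' i) (e' j) = if i = j then 1 else 0 := by
        intro i j
        rw [he'def]
        show E₂.met (Φl (ιn₁ (κ₁ i))) (Φl (ιn₁ (κ₁ j))) = _
        rw [hΦmet _ _ (hn₁mem _ (hκ₁mem i)) (hn₁mem _ (hκ₁mem j)),
            hB₁met _ (hκ₁mem i) _ (hκ₁mem j)]
        exact hκ₁on i j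
      have hespan : Submodule.span ℝ (Set.range e) = Submodule.span ℝ (Set.range e') := by
        have hre : Set.range e = ιn₂ '' Set.range κ₂ := Set.range_comp _ _
        have hre' : Set.range e' = Φl '' (ιn₁ '' Set.range κ₁) := by
          rw [he'def]
          show Set.range (Φl ∘ (ιn₁ ∘ κ₁)) = _
          rw [Set.range_comp, Set.range_comp]
        rw [hre, hre', Submodule.span_image, Submodule.span_image, Submodule.span_image,
            hκ₂span, hκ₁span, hstar]
      set Fl := T3fun E₂ (ιm₂ ↑(φ x)) (ιm₂ ↑(φ y)) with hFldef
      set Gl := T3fun E₂ (ιm₂ ↑(φ u)) (ιm₂ ↑(φ v)) with hGldef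
      have hkey := sum_onb_eq E₂ e e' hemem he'mem heon he'on hespan Fl Gl
      have hL : ∀ j, Fl (e j) * Gl (e j)
          = (D₂.met ((κ₂ j) ↑(φ x))) ↑(φ y) * (D₂.met ((κ₂ j) ↑(φ u))) ↑(φ v) := by
        intro j
        rw [hFldef, hGldef, T3fun_apply, T3fun_apply]
        show E₂.T3 (ιn₂ (κ₂ j)) _ _ * E₂.T3 (ιn₂ (κ₂ j)) _ _ = _
        rw [hT3n₂ _ (hκ₂mem j) _ (φ x).2 _ (φ y).2, hT3n₂ _ (hκ₂mem j) _ (φ u).2 _ (φ v).2]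
      have hR' : ∀ i, Fl (e' i) * Gl (e' i)
          = (D₁.met ((κ₁ i) ↑x)) ↑y * (D₁.met ((κ₁ i) ↑u)) ↑v := by
        intro i
        rw [hFldef, hGldef, T3fun_apply, T3fun_apply]
        show E₂.T3 (Φl (ιn₁ (κ₁ i))) _ _ * E₂.T3 (Φl (ιn₁ (κ₁ i))) _ _ = _
        rw [hφ x, hφ y, hφ u, hφ v,
            hΦT3 _ _ _ (hn₁mem _ (hκ₁mem i)) (hm₁mem _ x.2) (hm₁mem _ y.2),
            hΦT3 _ _ _ (hn₁mem _ (hκ₁mem i)) (hm₁mem _ u.2) (hm₁mem _ v.2),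
            hT3n₁ _ (hκ₁mem i) _ x.2 _ y.2, hT3n₁ _ (hκ₁mem i) _ u.2 _ v.2]
      calc ∑ j : Fin l₂, (D₂.met ((κ₂ j) ↑(φ x))) ↑(φ y) * (D₂.met ((κ₂ j) ↑(φ u))) ↑(φ v)
          = ∑ j : Fin l₂, Fl (e j) * Gl (e j) := by
            exact Finset.sum_congr rfl (fun j _ => (hL j).symm)
        _ = ∑ i : Fin l₁, Fl (e' i) * Gl (e' i) := hkey
        _ = ∑ i : Fin l₁, (D₁.met ((κ₁ i) ↑x)) ↑y * (D₁.met ((κ₁ i) ↑u)) ↑v :=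
            Finset.sum_congr rfl (fun i _ => hR' i)
    have := h3.symm.trans h2
    rw [h1] at this
    rw [hsum] at this
    linarith
  -- Step 6: apply the model isomorphism theorem to the bases
  obtain ⟨τ, hτφ, hτh, hτm⟩ := modelIso D₁ D₂ htr₁ htr₂ φ hmetφ hTφ hRφ
  set τl := τ.toLinearEquiv with hτldef
  -- correspondence between k₁ and k₂ under conjugation by τ
  have hexist₂ : ∀ f ∈ k₁.toSubmodule, ∃ f₂ ∈ k₂.toSubmodule, ιn₂ f₂ = Φl (ιn₁ f) := by
    intro f hf
    have h1 : Φl (ιn₁ f) ∈ Submodule.map ιn₂ k₂.toSubmodule := by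
      rw [hstar]; exact ⟨ιn₁ f, ⟨f, hf, rfl⟩, rfl⟩
    obtain ⟨f₂, hf₂, hfe⟩ := h1
    exact ⟨f₂, hf₂, hfe⟩
  have hcorr : ∀ f ∈ k₁.toSubmodule, ∀ f₂ ∈ k₂.toSubmodule,
      ιn₂ f₂ = Φl (ιn₁ f) → τl.conj f = f₂ := by
    intro f hf f₂ hf₂ hfe
    have hfk : f ∈ k₁ := (LieSubalgebra.mem_toSubmodule _).mp hf
    have hf₂k : f₂ ∈ k₂ := (LieSubalgebra.mem_toSubmodule _).mp hf₂
    have hfsg : f ∈ sg D₁ := hk₁ hfk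
    have hf₂sg : f₂ ∈ sg D₂ := hk₂ hf₂k
    apply LinearMap.ext
    intro z
    have hdz := D₂.projh_add_projm z
    have hhpart : (τl.conj f) (D₂.projh z) = f₂ (D₂.projh z) := by
      have hz1 : f₂ (D₂.projh z) = 0 :=
        hf₂sg.2.1 _ ((LieSubalgebra.mem_toSubmodule _).mp (D₂.projh_mem' z))
      have ha := D₂.projh_mem' z
      rw [← hτh] at ha
      obtain ⟨a₀, ha₀, hae⟩ := ha
      rw [hz1, LinearEquiv.conj_apply_apply, ← hae]
      have hs : τl.symm (τl.toLinearMap a₀) = a₀ := τl.symm_apply_apply a₀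
      rw [hs, hfsg.2.1 a₀ ((LieSubalgebra.mem_toSubmodule _).mp ha₀), map_zero]
    have hmpart : (τl.conj f) (D₂.projm z) = f₂ (D₂.projm z) := by
      have hm2 := D₂.projm_mem' z
      rw [← hτm] at hm2
      obtain ⟨x₁, hx₁, hxe⟩ := hm2
      have hfx₁ : f x₁ ∈ D₁.m := hfsg.2.2.1 x₁ hx₁
      have hLHS : (τl.conj f) (τl.toLinearMap x₁) = τl.toLinearMap (f x₁) := by
        rw [LinearEquiv.conj_apply_apply]
        have hs : τl.symm (τl.toLinearMap x₁) = x₁ := τl.symm_apply_apply x₁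
        rw [hs]
        rfl
      have hRHS : f₂ (τl.toLinearMap x₁) = τl.toLinearMap (f x₁) := by
        have ht1 : τl.toLinearMap x₁ = ↑(φ ⟨x₁, hx₁⟩) := hτφ ⟨x₁, hx₁⟩
        have ht2 : τl.toLinearMap (f x₁) = ↑(φ ⟨f x₁, hfx₁⟩) := hτφ ⟨f x₁, hfx₁⟩
        rw [ht1, ht2]
        refine D₂.eq_of_met (hf₂sg.2.2.1 _ (φ ⟨x₁, hx₁⟩).2) (φ _).2 (fun w hw => ?_)
        obtain ⟨w₀, rfl⟩ := hφsurj w hw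
        rw [← hT3n₂ f₂ hf₂k _ (φ ⟨x₁, hx₁⟩).2 _ (φ w₀).2]
        rw [hfe, hφ, hφ]
        rw [hΦT3 _ _ _ (hn₁mem f hfk) (hm₁mem _ hx₁) (hm₁mem _ w₀.2)]
        rw [hT3n₁ f hfk _ hx₁ _ w₀.2]
        have := hmetφ ⟨f x₁, hfx₁⟩ w₀
        rw [this]
      rw [← hxe, hLHS, hRHS]
    calc (τl.conj f) z
        = (τl.conj f) (D₂.projh z) + (τl.conj f) (D₂.projm z) := by
          rw [← map_add, hdz]
      _ = f₂ (D₂.projh z) + f₂ (D₂.projm z) := by rw [hhpart, hmpart]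
      _ = f₂ z := by rw [← map_add, hdz]
  refine ⟨τ, hτh, hτm, ?_, ?_, ?_⟩
  · -- the metric on m is preserved
    intro x hx y hy
    have h1 : τ x = ↑(φ ⟨x, hx⟩) := hτφ ⟨x, hx⟩
    have h2 : τ y = ↑(φ ⟨y, hy⟩) := hτφ ⟨y, hy⟩
    rw [h1, h2]
    exact hmetφ ⟨x, hx⟩ ⟨y, hy⟩
  · -- conjugation carries k₁ onto k₂
    refine le_antisymm ?_ ?_
    · rintro f' ⟨f, hf, rfl⟩
      obtain ⟨f₂, hf₂, hfe⟩ := hexist₂ f hf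
      have h1 : (τ.toLinearEquiv.conj).toLinearMap f = f₂ := hcorr f hf f₂ hf₂ hfe
      rw [h1]
      exact hf₂
    · intro f₂ hf₂
      have h1 : ιn₂ f₂ ∈ Submodule.map ιn₂ k₂.toSubmodule := ⟨f₂, hf₂, rfl⟩
      rw [hstar] at h1
      obtain ⟨q, ⟨f, hf, rfl⟩, hqe⟩ := h1
      exact ⟨f, hf, hcorr f hf f₂ hf₂ hqe.symm⟩
  · -- B is preserved
    intro f hfk f' hf'k
    have hf : f ∈ k₁.toSubmodule := (LieSubalgebra.mem_toSubmodule _).mpr hfk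
    have hf' : f' ∈ k₁.toSubmodule := (LieSubalgebra.mem_toSubmodule _).mpr hf'k
    obtain ⟨f₂, hf₂, hfe⟩ := hexist₂ f hf
    obtain ⟨f₂', hf₂', hfe'⟩ := hexist₂ f' hf'
    have h1 : τ.toLinearEquiv.conj f = f₂ := hcorr f hf f₂ hf₂ hfe
    have h2 : τ.toLinearEquiv.conj f' = f₂' := hcorr f' hf' f₂' hf₂' hfe'
    rw [h1, h2]
    rw [← hB₁met f hfk f' hf'k,
        ← hΦmet _ _ (hn₁mem f hfk) (hn₁mem f' hf'k), ← hfe, ← hfe']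
    exact (hB₂met f₂ ((LieSubalgebra.mem_toSubmodule _).mp hf₂) f₂'
      ((LieSubalgebra.mem_toSubmodule _).mp hf₂')).symm
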